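/- Uniform existence of anchor rows and columns under MCAR: let the entries D_{ab}, (a,b) ∈ [L]×[L], be i.i.d. Bernoulli(p) random variables with L ≥ 2, let Q ≥ 2 be an integer dividing L−1, and suppose p^{2Q²} ≥ 10 · Q · log(L−1) / (L−1). Then with probability at least 1 − L² · (L−1)^{−10}, which is at least 1 − C/L^8 for an absolute constant C > 0, simultaneously for every (i,j) ∈ [L]×[L] there exist sets R ⊆ [L]∖{i} and C' ⊆ [L]∖{j} with |R| = |C'| = Q such that D_{ab} = 1 for every (a,b) ∈ ({i} ∪ R) × ({j} ∪ C') with (a,b) ≠ (i,j). -/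

import Mathlib

open MeasureTheory ProbabilityTheory

/-- For an entry `(i,j)` of an `L × L` Boolean mask `D`, `HasAnchors D Q i j` says that
there exist a set `R` of `Q` rows distinct from `i` and a set `C'` of `Q` columns distinct
from `j` such that `D a b = 1` for every `(a,b) ∈ ({i} ∪ R) × ({j} ∪ C')` with
`(a,b) ≠ (i,j)`. -/
def HasAnchors {L : ℕ} (D : Fin L → Fin L → Bool) (Q : ℕ) (i j : Fin L) : Prop :=
  ∃ R C' : Finset (Fin L), i ∉ R ∧ j ∉ C' ∧ R.card = Q ∧ C'.card = Q ∧
    ∀ a ∈ insert i R, ∀ b ∈ insert j C', (a, b) ≠ (i, j) → D a b = true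

/-!
Fix an entry `(i, j)`. Split the other `L - 1` rows into `m = (L - 1) / Q` disjoint blocks of
size `Q`, and likewise the columns. The `k`-th row block and `k`-th column block form a candidate
anchor pair, which works iff `(Q + 1)² - 1` prescribed entries are revealed; these entry sets are
disjoint for different `k`, so the `m` candidates succeed independently, each with probability
`p ^ ((Q + 1)² - 1) ≥ p ^ (2Q²)`. Hence all of them fail with probability at most
`exp (-m p ^ (2Q²)) ≤ (L - 1)⁻¹⁰`, by the hypothesis on `p` and `m Q = L - 1`. A union bound over
the `L²` entries finishes the proof.
-/

open Finset Function

namespace Finset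

theorem exists_pairwise_disjoint_subsets_card_eq {α : Type*} {s : Finset α} {m Q : ℕ}
    (hs : #s = m * Q) :
    ∃ R : Fin m → Finset α, (∀ k, R k ⊆ s) ∧ (∀ k, #(R k) = Q) ∧ Pairwise (Disjoint on R) := by
  let e : Fin m × Fin Q ≃ s := Fintype.equivOfCardEq (by simp [hs])
  have he : ∀ {k k' q q'}, (e (k, q) : α) = e (k', q') → k = k' ∧ q = q' := fun h => by
    simpa using e.injective (Subtype.ext h)
  refine ⟨fun k => univ.map ⟨fun q => e (k, q), fun q q' h => (he h).2⟩, fun k x hx => ?_,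
    fun k => by simp, fun k k' hk => disjoint_left.2 fun x hx hx' => hk ?_⟩
  · obtain ⟨q, -, rfl⟩ := mem_map.1 hx
    exact (e (k, q)).2
  · obtain ⟨q, -, rfl⟩ := mem_map.1 hx
    obtain ⟨q', -, h⟩ := mem_map.1 hx'
    exact (he h.symm).1

end Finset

section AnchorEntries

variable {α β : Type*} [DecidableEq α] [DecidableEq β]

def anchorEntries (i : α) (R : Finset α) (j : β) (C : Finset β) : Finset (α × β) :=
  (insert i R ×ˢ insert j C).erase (i, j)

theorem card_anchorEntries {i : α} {R : Finset α} {j : β} {C : Finset β} (hi : i ∉ R)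
    (hj : j ∉ C) : #(anchorEntries i R j C) = (#R + 1) * (#C + 1) - 1 := by
  rw [anchorEntries, card_erase_of_mem (mk_mem_product (mem_insert_self i R)
    (mem_insert_self j C)), card_product, card_insert_of_notMem hi, card_insert_of_notMem hj]

theorem disjoint_anchorEntries {i : α} {R R' : Finset α} {j : β} {C C' : Finset β}
    (hR : Disjoint R R') (hC : Disjoint C C') :
    Disjoint (anchorEntries i R j C) (anchorEntries i R' j C') := by
  refine disjoint_left.2 fun ⟨a, b⟩ h h' => ?_
  simp only [anchorEntries, mem_erase, mem_product, mem_insert] at h h'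
  by_cases ha : a = i
  · subst ha
    have hb : b ≠ j := fun hb => h.1 (by rw [hb])
    exact disjoint_left.1 hC (h.2.2.resolve_left hb) (h'.2.2.resolve_left hb)
  · exact disjoint_left.1 hR (h.2.1.resolve_left ha) (h'.2.1.resolve_left ha)

end AnchorEntries

theorem hasAnchors_of_forall_anchorEntries {L Q : ℕ} {D : Fin L → Fin L → Bool} {i j : Fin L}
    {R C : Finset (Fin L)} (hi : i ∉ R) (hj : j ∉ C) (hR : #R = Q) (hC : #C = Q)
    (hD : ∀ q ∈ anchorEntries i R j C, D q.1 q.2 = true) : HasAnchors D Q i j :=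
  ⟨R, C, hi, hj, hR, hC, fun a ha b hb hab =>
    hD (a, b) (mem_erase.2 ⟨hab, mk_mem_product ha hb⟩)⟩

namespace ProbabilityTheory

variable {Ω ι κ : Type*} {_ : MeasurableSpace Ω} {μ : Measure Ω}

theorem iIndepFun.iIndepSet_preimage {β : ι → Type*} [∀ i, MeasurableSpace (β i)]
    {X : ∀ i, Ω → β i} (h : iIndepFun X μ) (hX : ∀ i, Measurable (X i))
    {s : ∀ i, Set (β i)} (hs : ∀ i, MeasurableSet (s i)) : iIndepSet (fun i => X i ⁻¹' s i) μ :=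
  (iIndepSet_iff_meas_biInter fun i => hX i (hs i)).2 fun S =>
    h.measure_inter_preimage_eq_mul S fun i _ => hs i

theorem iIndepSet.biInter_of_pairwise_disjoint {E : ι → Set Ω} (h : iIndepSet E μ)
    (hE : ∀ i, MeasurableSet (E i)) {S : κ → Finset ι} (hS : Pairwise (Disjoint on S)) :
    iIndepSet (fun k => ⋂ i ∈ S k, E i) μ := by
  classical
  refine (iIndepSet_iff_meas_biInter fun k => (S k).measurableSet_biInter fun i _ => hE i).2
    fun T => ?_
  rw [← set_biInter_biUnion, h.meas_biInter, prod_biUnion (hS.set_pairwise _)]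
  exact prod_congr rfl fun k _ => (h.meas_biInter _).symm

theorem iIndepSet.measure_iInter_compl [Fintype ι] {E : ι → Set Ω} (h : iIndepSet E μ) :
    μ (⋂ i, (E i)ᶜ) = ∏ i, μ (E i)ᶜ := by
  simpa using ((iIndepSet_iff_iIndep E μ).1 h).meas_biInter (S := univ) fun i _ =>
    (MeasurableSpace.measurableSet_generateFrom (Set.mem_singleton (E i))).compl

end ProbabilityTheory

theorem measure_not_hasAnchors_le {Ω : Type*} [MeasurableSpace Ω] {μ : Measure Ω}
    [IsProbabilityMeasure μ] {L Q m : ℕ} (hmQ : m * Q = L - 1) {p : ℝ} (hp0 : 0 ≤ p)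
    (hp1 : p ≤ 1) {D : Ω → Fin L → Fin L → Bool}
    (hmeas : ∀ a b : Fin L, Measurable fun ω => D ω a b)
    (hind : iIndepFun (fun q : Fin L × Fin L => fun ω => D ω q.1 q.2) μ)
    (hber : ∀ a b : Fin L, μ {ω | D ω a b = true} = ENNReal.ofReal p) (i j : Fin L) :
    μ {ω | HasAnchors (D ω) Q i j}ᶜ ≤ ENNReal.ofReal ((1 - p ^ ((Q + 1) ^ 2 - 1)) ^ m) := by
  have hcard : ∀ a : Fin L, #(univ.erase a) = m * Q := fun a => by
    rw [card_erase_of_mem (mem_univ a), card_univ, Fintype.card_fin, hmQ]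
  obtain ⟨R, hRi, hR, hRdisj⟩ := exists_pairwise_disjoint_subsets_card_eq (hcard i)
  obtain ⟨C, hCj, hC, hCdisj⟩ := exists_pairwise_disjoint_subsets_card_eq (hcard j)
  have hiR : ∀ k, i ∉ R k := fun k h => notMem_erase i univ (hRi k h)
  have hjC : ∀ k, j ∉ C k := fun k h => notMem_erase j univ (hCj k h)
  set E : Fin L × Fin L → Set Ω := fun q => (fun ω => D ω q.1 q.2) ⁻¹' {true}
  have hE : ∀ q, MeasurableSet (E q) := fun q => hmeas q.1 q.2 (measurableSet_singleton true)
  have hEind : iIndepSet E μ :=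
    hind.iIndepSet_preimage (fun q => hmeas q.1 q.2) fun _ => measurableSet_singleton true
  set A : Fin m → Set Ω := fun k => ⋂ q ∈ anchorEntries i (R k) j (C k), E q
  have hAind : iIndepSet A μ := hEind.biInter_of_pairwise_disjoint hE fun k k' hk =>
    disjoint_anchorEntries (hRdisj hk) (hCdisj hk)
  have hA : ∀ k, μ (A k)ᶜ = 1 - ENNReal.ofReal p ^ ((Q + 1) ^ 2 - 1) := fun k => by
    rw [prob_compl_eq_one_sub (measurableSet_biInter _ fun q _ => hE q),
      hEind.meas_biInter, prod_congr rfl fun q _ => hber q.1 q.2, prod_const,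
      card_anchorEntries (hiR k) (hjC k), hR k, hC k, sq]
  have hbad : {ω | HasAnchors (D ω) Q i j}ᶜ ⊆ ⋂ k, (A k)ᶜ := fun ω hω =>
    Set.mem_iInter.2 fun k hk => hω <| hasAnchors_of_forall_anchorEntries (hiR k) (hjC k)
      (hR k) (hC k) fun q hq => Set.mem_iInter₂.1 hk q hq
  have hpN : 0 ≤ 1 - p ^ ((Q + 1) ^ 2 - 1) := sub_nonneg.2 (pow_le_one₀ hp0 hp1)
  calc μ {ω | HasAnchors (D ω) Q i j}ᶜ ≤ μ (⋂ k, (A k)ᶜ) := measure_mono hbad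
    _ = ENNReal.ofReal ((1 - p ^ ((Q + 1) ^ 2 - 1)) ^ m) := by
      rw [hAind.measure_iInter_compl, prod_congr rfl fun k _ => hA k, prod_const, card_univ,
        Fintype.card_fin, ENNReal.ofReal_pow hpN, ENNReal.ofReal_sub _ (pow_nonneg hp0 _),
        ENNReal.ofReal_one, ENNReal.ofReal_pow hp0]

theorem one_sub_pow_le_inv_pow_ten {Q m : ℕ} (hQ : 2 ≤ Q) {t p : ℝ} (ht : 0 < t)
    (hmQ : (m : ℝ) * Q = t) (hp0 : 0 ≤ p) (hp1 : p ≤ 1)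
    (hgap : 10 * (Q : ℝ) * Real.log t / t ≤ p ^ (2 * Q ^ 2)) :
    (1 - p ^ ((Q + 1) ^ 2 - 1)) ^ m ≤ (t ^ 10)⁻¹ := by
  set x := p ^ ((Q + 1) ^ 2 - 1)
  have hexp : (Q + 1) ^ 2 - 1 ≤ 2 * Q ^ 2 := by
    have : 2 * Q ≤ Q * Q := Nat.mul_le_mul_right Q hQ
    rw [Nat.sub_le_iff_le_add]
    nlinarith
  have hx : p ^ (2 * Q ^ 2) ≤ x := pow_le_pow_of_le_one hp0 hp1 hexp
  have hmx : 10 * Real.log t ≤ m * x := calc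
    10 * Real.log t = m * (10 * Q * Real.log t / t) := by
      rw [show (m : ℝ) * (10 * Q * Real.log t / t) = 10 * Real.log t * (m * Q / t) by ring,
        hmQ, div_self ht.ne', mul_one]
    _ ≤ m * x := mul_le_mul_of_nonneg_left (hgap.trans hx) m.cast_nonneg
  calc (1 - x) ^ m ≤ Real.exp (-x) ^ m :=
        pow_le_pow_left₀ (sub_nonneg.2 (pow_le_one₀ hp0 hp1)) (Real.one_sub_le_exp_neg x) m
    _ = Real.exp (-(m * x)) := by rw [← Real.exp_nat_mul]; ring_nf
    _ ≤ Real.exp (-Real.log (t ^ 10)) :=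
      Real.exp_le_exp.2 (by rw [Real.log_pow]; push_cast; linarith)
    _ = (t ^ 10)⁻¹ := by rw [Real.exp_neg, Real.exp_log (by positivity)]

theorem MeasureTheory.one_sub_card_mul_le_measure_iInter {Ω ι : Type*} [MeasurableSpace Ω]
    {μ : Measure Ω} [IsProbabilityMeasure μ] [Fintype ι] {s : ι → Set Ω} {ε : ENNReal}
    (hs : ∀ i, μ (s i)ᶜ ≤ ε) : 1 - Fintype.card ι * ε ≤ μ (⋂ i, s i) := by
  have hunion : μ (⋂ i, s i)ᶜ ≤ Fintype.card ι * ε := calc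
    μ (⋂ i, s i)ᶜ ≤ ∑ i, μ (s i)ᶜ := by
      rw [Set.compl_iInter]; exact measure_iUnion_fintype_le μ _
    _ ≤ ∑ _ : ι, ε := sum_le_sum fun i _ => hs i
    _ = Fintype.card ι * ε := by rw [sum_const, card_univ, nsmul_eq_mul]
  calc 1 - Fintype.card ι * ε ≤ 1 - μ (⋂ i, s i)ᶜ := tsub_le_tsub_left hunion 1
    _ ≤ μ (⋂ i, s i) := by
      rw [tsub_le_iff_right, ← measure_univ (μ := μ)]; exact measure_univ_le_add_compl _

theorem sq_div_sub_one_pow_ten_le {x : ℝ} (hx : 2 ≤ x) :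
    x ^ 2 / (x - 1) ^ 10 ≤ 1024 / x ^ 8 := by
  rw [div_le_div_iff₀ (pow_pos (by linarith) _) (by positivity)]
  calc x ^ 2 * x ^ 8 = x ^ 10 := by ring
    _ ≤ (2 * (x - 1)) ^ 10 := pow_le_pow_left₀ (by linarith) (by linarith) 10
    _ = 1024 * (x - 1) ^ 10 := by ring

/-- **Uniform existence of anchor rows and columns under MCAR.**
There is an absolute constant `C > 0` such that the following holds.  Let the entries
`D_{ab}`, `(a,b) ∈ [L] × [L]`, be i.i.d. Bernoulli(p) with `L ≥ 2`, let `Q ≥ 2` divide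
`L − 1`, and suppose `p^{2Q²} ≥ 10 · Q · log(L−1) / (L−1)`.  Then with probability at
least `1 − L² · (L−1)^{−10}`, which is at least `1 − C / L^8`, simultaneously every entry
`(i,j)` admits `Q` anchor rows and `Q` anchor columns forming a fully revealed
submatrix. -/
theorem anchors_exist_mcar_uniform :
    ∃ C : ℝ, 0 < C ∧
      ∀ (Ω : Type) (_ : MeasurableSpace Ω) (μ : Measure Ω), IsProbabilityMeasure μ →
      ∀ (L Q : ℕ), 2 ≤ L → 2 ≤ Q → Q ∣ (L - 1) →
      ∀ p : ℝ, 0 ≤ p → p ≤ 1 →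
      10 * (Q : ℝ) * Real.log ((L : ℝ) - 1) / ((L : ℝ) - 1) ≤ p ^ (2 * Q ^ 2) →
      ∀ D : Ω → Fin L → Fin L → Bool,
      (∀ a b : Fin L, Measurable fun ω => D ω a b) →
      iIndepFun
        (fun q : Fin L × Fin L => fun ω => D ω q.1 q.2) μ →
      (∀ a b : Fin L, μ {ω | D ω a b = true} = ENNReal.ofReal p) →
      (1 - ENNReal.ofReal ((L : ℝ) ^ 2 / ((L : ℝ) - 1) ^ (10 : ℕ))
          ≤ μ {ω | ∀ i j : Fin L, HasAnchors (D ω) Q i j}) ∧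
      (1 - ENNReal.ofReal (C / (L : ℝ) ^ 8)
          ≤ μ {ω | ∀ i j : Fin L, HasAnchors (D ω) Q i j}) := by
  refine ⟨1024, by norm_num, ?_⟩
  intro Ω _ μ _ L Q hL hQ ⟨m, hm⟩ p hp0 hp1 hgap D hmeas hind hber
  have hL' : (2 : ℝ) ≤ L := by exact_mod_cast hL
  have hmQ : m * Q = L - 1 := by rw [hm, mul_comm]
  have hmQ' : (m : ℝ) * Q = L - 1 := by rw [← Nat.cast_mul, hmQ, Nat.cast_sub (by omega)]; simp
  have hentry : ∀ q : Fin L × Fin L,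
      μ {ω | HasAnchors (D ω) Q q.1 q.2}ᶜ ≤ ENNReal.ofReal ((((L : ℝ) - 1) ^ 10)⁻¹) :=
    fun q => (measure_not_hasAnchors_le hmQ hp0 hp1 hmeas hind hber q.1 q.2).trans
      (ENNReal.ofReal_le_ofReal (one_sub_pow_le_inv_pow_ten hQ (by linarith) hmQ' hp0 hp1 hgap))
  have hall : 1 - ENNReal.ofReal ((L : ℝ) ^ 2 / ((L : ℝ) - 1) ^ (10 : ℕ))
      ≤ μ {ω | ∀ i j : Fin L, HasAnchors (D ω) Q i j} := by
    convert one_sub_card_mul_le_measure_iInter hentry using 2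
    · rw [Fintype.card_prod, Fintype.card_fin, ← ENNReal.ofReal_natCast,
        ← ENNReal.ofReal_mul (by positivity)]
      congr 1; push_cast; ring
    · ext ω; simp [Prod.forall]
  exact ⟨hall,
    (tsub_le_tsub_left (ENNReal.ofReal_le_ofReal (sq_div_sub_one_pow_ten_le hL')) 1).trans hall⟩
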